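/- arXiv:2512.08835 — 5 statements merged into one kernel-verified Lean document; each statement's English description precedes it below -/
import Mathlib

section
/- Let (X,E,p) be a presheaf over a semilattice E, let (Y,F) and (Y',F') be subpresheaves of X (with structure maps the restrictions of p), and let α : Y → Y' and θ : F → F' be functions. Then the following are equivalent: (1) (α,θ) is an isomorphism of supported actions, i.e. α and θ are bijections, θ is a semigroup homomorphism, α(y·e) = α(y)·θ(e) for all y ∈ Y and e ∈ F, and p(α(y)) = θ(p(y)) for all y ∈ Y; (2) α and θ are order-isomorphisms such that p(α(y)) = θ(p(y)) for all y ∈ Y. -/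
/-- A meet-semilattice: a commutative semigroup all of whose elements are idempotent. -/
class MeetSL (E : Type*) extends CommSemigroup E where
  idem : ∀ e : E, e * e = e

/-- The natural partial order on a meet-semilattice: `e ≤ f` iff `e = ef`. -/
def sle {E : Type*} [MeetSL E] (e f : E) : Prop := e = e * f

/-- The principal order-ideal `e↓ = {h ∈ E : h ≤ e}` of a meet-semilattice. -/
abbrev dOn (E : Type*) [MeetSL E] (e : E) : Type _ := {h : E // sle h e}

/-- A presheaf of sets over a meet-semilattice `E`, viewed as a supported action
`(X, E, p)` of `E` on `X`. -/
structure SPresheaf (X : Type*) (E : Type*) [MeetSL E] where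
  act : X → E → X
  p : X → E
  act_act : ∀ x e f, act (act x e) f = act x (e * f)
  act_p : ∀ x, act x (p x) = x
  p_act : ∀ x e, p (act x e) = p x * e

namespace SPresheaf
variable {X E : Type*} [MeetSL E]

/-- The natural partial order on a presheaf: `x ≤ y` iff `x = y · p(x)`. -/
def xle (P : SPresheaf X E) (x y : X) : Prop := x = P.act y (P.p x)

/-- The underlying set `X · e = {x ∈ X : p(x) ≤ e}` of the principal subpresheaf at `e`. -/
abbrev sub (P : SPresheaf X E) (e : E) : Type _ := {x : X // sle (P.p x) e}

end SPresheaf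

section Helpers
variable {E : Type*} [MeetSL E]

lemma sle_antisymm' {a b : E} (h1 : sle a b) (h2 : sle b a) : a = b := by
  rw [sle] at h1 h2
  rw [h1, mul_comm, ← h2]

lemma sle_mul_left' (a b : E) : sle (a * b) a := by
  show a * b = (a * b) * a
  rw [mul_comm (a*b) a, ← mul_assoc, MeetSL.idem]

lemma sle_mul_right' (a b : E) : sle (a * b) b := by
  show a * b = (a * b) * b
  rw [mul_assoc, MeetSL.idem]

lemma sle_mul' {c a b : E} (h1 : sle c a) (h2 : sle c b) : sle c (a * b) := by
  show c = c * (a * b)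
  rw [← mul_assoc, ← h1, ← h2]

variable {X : Type*}

lemma act_xle' (P : SPresheaf X E) (y : X) (e : E) : P.xle (P.act y e) y := by
  show P.act y e = P.act y (P.p (P.act y e))
  rw [P.p_act, ← P.act_act, P.act_p]

end Helpers

/-- for subpresheaves `(Y, F)` and `(Y', F')` of a presheaf `(X, E, p)` and a pair
of functions `α : Y → Y'`, `θ : F → F'`, the pair `(α, θ)` is an isomorphism of supported
actions if and only if `α` and `θ` are order-isomorphisms with `p(α(y)) = θ(p(y))`. -/

theorem iso_of_subpresheaves {X E : Type*} [MeetSL E] (P : SPresheaf X E)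
    (Y Y' : Set X) (F F' : Set E)
    (hY : ∀ x y : X, y ∈ Y → P.xle x y → x ∈ Y)
    (hY' : ∀ x y : X, y ∈ Y' → P.xle x y → x ∈ Y')
    (hF : ∀ a ∈ F, ∀ b ∈ F, a * b ∈ F) (hpF : ∀ y ∈ Y, P.p y ∈ F)
    (hF' : ∀ a ∈ F', ∀ b ∈ F', a * b ∈ F') (hpF' : ∀ y ∈ Y', P.p y ∈ F')
    (α : ↥Y → ↥Y') (θ : ↥F → ↥F') :
    (Function.Bijective α ∧ Function.Bijective θ ∧
      (∀ (a b : ↥F) (h : a.1 * b.1 ∈ F), (θ ⟨a.1 * b.1, h⟩).1 = (θ a).1 * (θ b).1) ∧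
      (∀ (y : ↥Y) (e : ↥F) (h : P.act y.1 e.1 ∈ Y),
        (α ⟨P.act y.1 e.1, h⟩).1 = P.act (α y).1 (θ e).1) ∧
      (∀ y : ↥Y, P.p (α y).1 = (θ ⟨P.p y.1, hpF y.1 y.2⟩).1)) ↔
    (Function.Bijective α ∧ Function.Bijective θ ∧
      (∀ a b : ↥Y, P.xle a.1 b.1 ↔ P.xle (α a).1 (α b).1) ∧
      (∀ a b : ↥F, sle a.1 b.1 ↔ sle (θ a).1 (θ b).1) ∧
      (∀ y : ↥Y, P.p (α y).1 = (θ ⟨P.p y.1, hpF y.1 y.2⟩).1)) := by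
  constructor
  · rintro ⟨hbα, hbθ, hhom, hequiv, hp⟩
    refine ⟨hbα, hbθ, ?_, ?_, hp⟩
    · intro a b
      constructor
      · intro h
        have h' : P.act b.1 (P.p a.1) ∈ Y := by rw [← h]; exact a.2
        have ha : a = ⟨P.act b.1 (P.p a.1), h'⟩ := Subtype.ext h
        show (α a).1 = P.act (α b).1 (P.p (α a).1)
        rw [hp a]
        calc (α a).1 = (α ⟨P.act b.1 (P.p a.1), h'⟩).1 := by rw [← ha]
          _ = P.act (α b).1 (θ ⟨P.p a.1, hpF a.1 a.2⟩).1 :=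
              hequiv b ⟨P.p a.1, hpF a.1 a.2⟩ h'
      · intro h
        have hz : P.act b.1 (P.p a.1) ∈ Y := hY _ b.1 b.2 (act_xle' P b.1 (P.p a.1))
        have key : (α ⟨P.act b.1 (P.p a.1), hz⟩).1 = (α a).1 := by
          rw [hequiv b ⟨P.p a.1, hpF a.1 a.2⟩ hz, ← hp a, ← h]
        have := hbα.1 (Subtype.ext key)
        exact (congrArg Subtype.val this).symm
    · intro a b
      have h' : a.1 * b.1 ∈ F := hF a.1 a.2 b.1 b.2
      constructor
      · intro h
        have ha : a = ⟨a.1 * b.1, h'⟩ := Subtype.ext h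
        show (θ a).1 = (θ a).1 * (θ b).1
        calc (θ a).1 = (θ ⟨a.1 * b.1, h'⟩).1 := by rw [← ha]
          _ = (θ a).1 * (θ b).1 := hhom a b h'
      · intro h
        have key : (θ ⟨a.1 * b.1, h'⟩) = θ a := Subtype.ext (by rw [hhom a b h']; exact h.symm)
        have := hbθ.1 key
        exact (congrArg Subtype.val this).symm
  · rintro ⟨hbα, hbθ, hordα, hordθ, hp⟩
    have hhom : ∀ (a b : ↥F) (h : a.1 * b.1 ∈ F),
        (θ ⟨a.1 * b.1, h⟩).1 = (θ a).1 * (θ b).1 := by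
      intro a b h
      set c : ↥F := ⟨a.1 * b.1, h⟩ with hc
      have h1 : sle (θ c).1 (θ a).1 := (hordθ c a).1 (sle_mul_left' a.1 b.1)
      have h2 : sle (θ c).1 (θ b).1 := (hordθ c b).1 (sle_mul_right' a.1 b.1)
      have hmem : (θ a).1 * (θ b).1 ∈ F' := hF' _ (θ a).2 _ (θ b).2
      obtain ⟨d, hd⟩ := hbθ.2 ⟨(θ a).1 * (θ b).1, hmem⟩
      have hd1 : (θ d).1 = (θ a).1 * (θ b).1 := by rw [hd]
      have hda : sle d.1 a.1 := (hordθ d a).2 (by rw [sle, hd1]; exact sle_mul_left' _ _)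
      have hdb : sle d.1 b.1 := (hordθ d b).2 (by rw [sle, hd1]; exact sle_mul_right' _ _)
      have hdc : sle (θ d).1 (θ c).1 := (hordθ d c).1 (sle_mul' hda hdb)
      exact sle_antisymm' (sle_mul' h1 h2) (by rw [sle, ← hd1]; exact hdc)
    refine ⟨hbα, hbθ, hhom, ?_, hp⟩
    intro y e h
    set z : ↥Y := ⟨P.act y.1 e.1, h⟩ with hz
    have h1 : P.xle (α z).1 (α y).1 := (hordα z y).1 (act_xle' P y.1 e.1)
    have h2 : P.p z.1 = P.p y.1 * e.1 := P.p_act y.1 e.1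
    have h3 : (⟨P.p z.1, hpF z.1 z.2⟩ : ↥F) = ⟨P.p y.1 * e.1, hF _ (hpF y.1 y.2) _ e.2⟩ :=
      Subtype.ext h2
    calc (α z).1 = P.act (α y).1 (P.p (α z).1) := h1
      _ = P.act (α y).1 ((θ ⟨P.p z.1, hpF z.1 z.2⟩).1) := by rw [hp z]
      _ = P.act (α y).1 ((θ ⟨P.p y.1, hpF y.1 y.2⟩).1 * (θ e).1) := by
          rw [h3, hhom ⟨P.p y.1, hpF y.1 y.2⟩ e]
      _ = P.act (α y).1 (P.p (α y).1 * (θ e).1) := by rw [hp y]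
      _ = P.act (P.act (α y).1 (P.p (α y).1)) (θ e).1 := (P.act_act _ _ _).symm
      _ = P.act (α y).1 (θ e).1 := by rw [P.act_p]
end

section
/- Let S be an inverse semigroup, (X,S,p) a supported action, ρ_X its characteristic congruence, and ξ : S → T_Y the generalised Munn representation (where Y = (X,E(S),p)). Then: (1) ρ_X is a congruence on S and ker ξ ⊆ ρ_X; (2) ρ_X is idempotent-separating if and only if ker ξ = ρ_X; (3) if ρ_X is the equality relation, then ξ is injective (faithful). -/
/-- An inverse semigroup: every element `a` has a unique inverse `a⁻¹` with
`a * a⁻¹ * a = a` and `a⁻¹ * a * a⁻¹ = a⁻¹`. -/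
class InvSemigroup (S : Type*) extends Semigroup S, Inv S where
  mul_inv_mul : ∀ a : S, a * a⁻¹ * a = a
  inv_mul_inv : ∀ a : S, a⁻¹ * a * a⁻¹ = a⁻¹
  inv_unique : ∀ a b : S, a * b * a = a → b * a * b = b → b = a⁻¹

namespace InvSemigroup

variable {S : Type*} [InvSemigroup S]

theorem inv_eq {a b : S} (h1 : a * b * a = a) (h2 : b * a * b = b) : b = a⁻¹ :=
  inv_unique a b h1 h2

theorem inv_inv (a : S) : a⁻¹⁻¹ = a :=
  (inv_eq (inv_mul_inv a) (mul_inv_mul a)).symm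

theorem idem_inv {e : S} (he : e * e = e) : e⁻¹ = e := by
  have h : e = e⁻¹ := inv_eq (a := e) (b := e) (by rw [he, he]) (by rw [he, he])
  exact h.symm

theorem mul_mul {a : S} (ha : a * a = a) (y : S) : a * (a * y) = a * y := by
  rw [← mul_assoc, ha]

theorem fse_eq {e f : S} (he : e * e = e) (hf : f * f = f) :
    f * (e * f)⁻¹ * e = (e * f)⁻¹ := by
  have hs := mul_inv_mul (e * f)
  have hs2 := inv_mul_inv (e * f)
  simp only [mul_assoc] at hs hs2
  have h3 := congrArg (· * e) hs2
  simp only [mul_assoc] at h3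
  apply inv_eq
  · simp only [mul_assoc]
    rw [mul_mul he, mul_mul hf]
    exact hs
  · simp only [mul_assoc]
    rw [mul_mul he, mul_mul hf]
    rw [h3]

theorem s_idem {e f : S} (he : e * e = e) (hf : f * f = f) :
    (e * f)⁻¹ * (e * f)⁻¹ = (e * f)⁻¹ := by
  have hs2 := inv_mul_inv (e * f)
  simp only [mul_assoc] at hs2
  have h3 := congrArg (· * e) hs2
  simp only [mul_assoc] at h3
  have h4 := fse_eq he hf
  simp only [mul_assoc] at h4
  rw [← h4]
  simp only [mul_assoc]
  rw [h3]

theorem idem_mul {e f : S} (he : e * e = e) (hf : f * f = f) :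
    (e * f) * (e * f) = e * f := by
  have hs := s_idem he hf
  have hinv : (e * f)⁻¹ = e * f := by
    have h1 := idem_inv hs
    rw [inv_inv] at h1
    exact h1.symm
  rw [hinv] at hs
  exact hs

theorem idem_comm {e f : S} (he : e * e = e) (hf : f * f = f) : e * f = f * e := by
  have hef := idem_mul he hf
  have hfe := idem_mul hf he
  have h1 : f * e = (e * f)⁻¹ := by
    apply inv_eq
    · simp only [mul_assoc]
      rw [mul_mul hf, mul_mul he]
      have h5 := hef
      simp only [mul_assoc] at h5
      exact h5
    · simp only [mul_assoc]
      rw [mul_mul he, mul_mul hf]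
      have h5 := hfe
      simp only [mul_assoc] at h5
      exact h5
  have h2 : (e * f)⁻¹ = e * f := idem_inv hef
  rw [h1, h2]

theorem d_idem (s : S) : (s⁻¹ * s) * (s⁻¹ * s) = s⁻¹ * s := by
  have h := inv_mul_inv s
  calc (s⁻¹ * s) * (s⁻¹ * s) = (s⁻¹ * s * s⁻¹) * s := by simp only [mul_assoc]
    _ = s⁻¹ * s := by rw [h]

theorem r_idem (s : S) : (s * s⁻¹) * (s * s⁻¹) = s * s⁻¹ := by
  have h := mul_inv_mul s
  calc (s * s⁻¹) * (s * s⁻¹) = (s * s⁻¹ * s) * s⁻¹ := by simp only [mul_assoc]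
    _ = s * s⁻¹ := by rw [h]

theorem mul_inv_rev (a b : S) : (a * b)⁻¹ = b⁻¹ * a⁻¹ := by
  have hcomm : (b * b⁻¹) * (a⁻¹ * a) = (a⁻¹ * a) * (b * b⁻¹) :=
    idem_comm (r_idem b) (d_idem a)
  symm
  apply inv_eq
  · calc a * b * (b⁻¹ * a⁻¹) * (a * b)
        = a * ((b * b⁻¹) * (a⁻¹ * a)) * b := by simp only [mul_assoc]
      _ = a * ((a⁻¹ * a) * (b * b⁻¹)) * b := by rw [hcomm]
      _ = (a * a⁻¹ * a) * (b * b⁻¹ * b) := by simp only [mul_assoc]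
      _ = a * b := by rw [mul_inv_mul, mul_inv_mul]
  · calc b⁻¹ * a⁻¹ * (a * b) * (b⁻¹ * a⁻¹)
        = b⁻¹ * ((a⁻¹ * a) * (b * b⁻¹)) * a⁻¹ := by simp only [mul_assoc]
      _ = b⁻¹ * ((b * b⁻¹) * (a⁻¹ * a)) * a⁻¹ := by rw [hcomm]
      _ = (b⁻¹ * b * b⁻¹) * (a⁻¹ * a * a⁻¹) := by simp only [mul_assoc]
      _ = b⁻¹ * a⁻¹ := by rw [inv_mul_inv, inv_mul_inv]

end InvSemigroup

/-- A supported (right) action `(X, S, p)` of an inverse semigroup `S` on a set `X`: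
the support map `p` takes values in the idempotents of `S` and satisfies (SA1)-(SA3). -/
structure SupportedAction (X : Type*) (S : Type*) [InvSemigroup S] where
  act : X → S → X
  p : X → S
  p_idem : ∀ x, p x * p x = p x
  act_act : ∀ x s t, act (act x s) t = act x (s * t)
  act_p : ∀ x, act x (p x) = x
  p_act : ∀ x s, p (act x s) = s⁻¹ * p x * s

namespace SupportedAction
variable {X S : Type*} [InvSemigroup S]

/-- The natural partial order on a supported action: `x ≤ y` iff `x = y · p(x)`. -/
def xle (A : SupportedAction X S) (x y : X) : Prop := x = A.act y (A.p x)

/-- The characteristic congruence of a supported action: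
`(s, t) ∈ ρ_X` iff `x · s = x · t` for all `x ∈ X`. -/
def rho (A : SupportedAction X S) (s t : S) : Prop := ∀ x, A.act x s = A.act x t

end SupportedAction

/-- An element of the generalised Munn semigroup `T_X` of the presheaf `P`: an isomorphism
`(α, θ)` between the principal subpresheaves `(X·e, e↓)` and `(X·f, f↓)`, i.e. a pair of
order-isomorphisms with `p(α(x)) = θ(p(x))` for all `x ∈ X·e`. -/
structure MunnElt {X E : Type*} [MeetSL E] (P : SPresheaf X E) where
  e : E
  f : E
  α : P.sub e ≃ P.sub f
  θ : dOn E e ≃ dOn E f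
  α_ord : ∀ x y : P.sub e, P.xle x.1 y.1 ↔ P.xle (α x).1 (α y).1
  θ_ord : ∀ a b : dOn E e, sle a.1 b.1 ↔ sle (θ a).1 (θ b).1
  compat : ∀ x : P.sub e, P.p (α x).1 = (θ ⟨P.p x.1, x.2⟩).1

namespace MunnElt
variable {X E : Type*} [MeetSL E] {P : SPresheaf X E}

/-- The partial-bijection graph of the first component of a Munn element. -/
def maps (t : MunnElt P) (x y : X) : Prop :=
  ∃ h : sle (P.p x) t.e, (t.α ⟨x, h⟩).1 = y

/-- The partial-bijection graph of the second component of a Munn element. -/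
def mapsE (t : MunnElt P) (a b : E) : Prop :=
  ∃ h : sle a t.e, (t.θ ⟨a, h⟩).1 = b

end MunnElt

/-- `mul` is the multiplication of the generalised Munn semigroup `T_X`: the product
`mul a b` is obtained by restricting `a` and `b` to the intersection of the relevant
principal subpresheaves and composing (apply `b` first, then `a`). -/
def IsMunnMul {X E : Type*} [MeetSL E] {P : SPresheaf X E}
    (mul : MunnElt P → MunnElt P → MunnElt P) : Prop :=
  ∀ a b : MunnElt P,
    (∀ x z : X, (mul a b).maps x z ↔ ∃ y, b.maps x y ∧ a.maps y z) ∧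
    (∀ h k : E, (mul a b).mapsE h k ↔ ∃ m, b.mapsE h m ∧ a.mapsE m k)

/-- `inv` sends each `(α, θ)` of the generalised Munn semigroup to `(α⁻¹, θ⁻¹)`. -/
def IsMunnInv {X E : Type*} [MeetSL E] {P : SPresheaf X E}
    (inv : MunnElt P → MunnElt P) : Prop :=
  ∀ t : MunnElt P,
    (∀ x y : X, (inv t).maps x y ↔ t.maps y x) ∧
    (∀ a b : E, (inv t).mapsE a b ↔ t.mapsE b a)

/-- The set of idempotents `E(S)` of an inverse semigroup. -/
abbrev ES (S : Type*) [InvSemigroup S] : Type _ := {e : S // e * e = e}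

open InvSemigroup in
instance instMeetSLES (S : Type*) [InvSemigroup S] : MeetSL (ES S) where
  mul a b := ⟨a.1 * b.1, idem_mul a.2 b.2⟩
  mul_assoc a b c := Subtype.ext (mul_assoc a.1 b.1 c.1)
  mul_comm a b := Subtype.ext (idem_comm a.2 b.2)
  idem a := Subtype.ext a.2

open InvSemigroup in
/-- The presheaf over `E(S)` obtained by restricting a supported action to the idempotents. -/
def SupportedAction.toPresheaf {X S : Type*} [InvSemigroup S] (A : SupportedAction X S) :
    SPresheaf X (ES S) where
  act x e := A.act x e.1
  p x := ⟨A.p x, A.p_idem x⟩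
  act_act x e f := A.act_act x e.1 f.1
  act_p x := A.act_p x
  p_act x e := by
    apply Subtype.ext
    show A.p (A.act x e.1) = A.p x * e.1
    rw [A.p_act, idem_inv e.2, idem_comm e.2 (A.p_idem x), mul_assoc, e.2]

/-- `ξ` is the generalised Munn representation `S → T_Y` (where `Y` is the presheaf
obtained from the supported action by restriction to the idempotents): it sends `s` to
`(α_{s⁻¹}, θ_{s⁻¹})` where `α_{s⁻¹} : X·(s⁻¹s) → X·(ss⁻¹), y ↦ y · s⁻¹` and
`θ_{s⁻¹} : (s⁻¹s)↓ → (ss⁻¹)↓, e ↦ s e s⁻¹`. -/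
def IsMunnRep {X S : Type*} [InvSemigroup S] (A : SupportedAction X S)
    (ξ : S → MunnElt A.toPresheaf) : Prop :=
  ∀ s : S, ((ξ s).e).1 = s⁻¹ * s ∧ ((ξ s).f).1 = s * s⁻¹ ∧
    (∀ x : A.toPresheaf.sub (ξ s).e, ((ξ s).α x).1 = A.act x.1 s⁻¹) ∧
    (∀ h : dOn (ES S) (ξ s).e, (((ξ s).θ h).1).1 = s * h.1.1 * s⁻¹)

section AuxProof

open InvSemigroup

namespace SupportedAction

variable {X S : Type*} [InvSemigroup S] (A : SupportedAction X S)

lemma rho_refl (s : S) : A.rho s s := fun _ => rfl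

lemma rho_symm {s t : S} (h : A.rho s t) : A.rho t s := fun x => (h x).symm

lemma rho_trans {s t u : S} (h1 : A.rho s t) (h2 : A.rho t u) : A.rho s u :=
  fun x => (h1 x).trans (h2 x)

lemma rho_of_eq {s t : S} (h : s = t) : A.rho s t := h ▸ A.rho_refl s

lemma rho_mul {s t s' t' : S} (hs : A.rho s s') (ht : A.rho t t') :
    A.rho (s * t) (s' * t') := by
  intro x
  rw [← A.act_act, ← A.act_act, hs x, ht (A.act x s')]

lemma rho_mulL (w : S) {s t : S} (h : A.rho s t) : A.rho (w * s) (w * t) :=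
  A.rho_mul (A.rho_refl w) h

lemma rho_mulR (w : S) {s t : S} (h : A.rho s t) : A.rho (s * w) (t * w) :=
  A.rho_mul h (A.rho_refl w)

/-- Lallement's lemma for the characteristic congruence. -/
lemma lallement {a : S} (h : A.rho a (a * a)) :
    ∃ e : S, e * e = e ∧ A.rho e a := by
  refine ⟨a * ((a * a)⁻¹ * a), ?_, ?_⟩
  · have key : a * ((a * a)⁻¹ * a) * (a * ((a * a)⁻¹ * a))
        = a * ((a * a)⁻¹ * (a * a) * (a * a)⁻¹) * a := by
      simp only [mul_assoc]
    rw [key, inv_mul_inv]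
    simp only [mul_assoc]
  · have h1 : A.rho (a * ((a * a)⁻¹ * a)) ((a * a) * ((a * a)⁻¹ * a)) :=
      A.rho_mulR _ h
    have h2 : A.rho ((a * a) * ((a * a)⁻¹ * a)) ((a * a) * ((a * a)⁻¹ * (a * a))) :=
      A.rho_mulL _ (A.rho_mulL _ h)
    have h3 : (a * a) * ((a * a)⁻¹ * (a * a)) = a * a := by
      rw [← mul_assoc]
      exact mul_inv_mul (a * a)
    exact A.rho_trans h1 (A.rho_trans h2 (A.rho_trans (A.rho_of_eq h3) (A.rho_symm h)))

lemma rho_idem_comm {u v : S} (hu : A.rho u (u * u)) (hv : A.rho v (v * v)) :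
    A.rho (u * v) (v * u) := by
  obtain ⟨e, he, hea⟩ := A.lallement hu
  obtain ⟨f, hf, hfb⟩ := A.lallement hv
  have h1 : A.rho (u * v) (e * f) := A.rho_mul (A.rho_symm hea) (A.rho_symm hfb)
  have h2 : e * f = f * e := idem_comm he hf
  have h3 : A.rho (f * e) (v * u) := A.rho_mul hfb hea
  exact A.rho_trans h1 (A.rho_trans (A.rho_of_eq h2) h3)

lemma rho_inv {s t : S} (h : A.rho s t) : A.rho s⁻¹ t⁻¹ := by
  have hac : A.rho (s * t⁻¹) ((s * t⁻¹) * (s * t⁻¹)) := by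
    have h1 : A.rho ((s * t⁻¹) * (s * t⁻¹)) ((s * t⁻¹) * (t * t⁻¹)) :=
      A.rho_mulL _ (A.rho_mulR _ h)
    have h2 : (s * t⁻¹) * (t * t⁻¹) = s * t⁻¹ := by
      calc (s * t⁻¹) * (t * t⁻¹) = s * (t⁻¹ * t * t⁻¹) := by simp only [mul_assoc]
        _ = s * t⁻¹ := by rw [inv_mul_inv]
    exact A.rho_symm (A.rho_trans h1 (A.rho_of_eq h2))
  have hca : A.rho (t⁻¹ * s) ((t⁻¹ * s) * (t⁻¹ * s)) := by
    have h1 : A.rho ((t⁻¹ * s) * (t⁻¹ * s)) ((t⁻¹ * t) * (t⁻¹ * s)) :=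
      A.rho_mulR _ (A.rho_mulL _ h)
    have h2 : (t⁻¹ * t) * (t⁻¹ * s) = t⁻¹ * s := by
      calc (t⁻¹ * t) * (t⁻¹ * s) = (t⁻¹ * t * t⁻¹) * s := by simp only [mul_assoc]
        _ = t⁻¹ * s := by rw [inv_mul_inv]
    exact A.rho_symm (A.rho_trans h1 (A.rho_of_eq h2))
  have hba : A.rho (s⁻¹ * s) ((s⁻¹ * s) * (s⁻¹ * s)) := A.rho_of_eq (d_idem s).symm
  have hab : A.rho (s * s⁻¹) ((s * s⁻¹) * (s * s⁻¹)) := A.rho_of_eq (r_idem s).symm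
  have haca : A.rho s (s * (t⁻¹ * s)) := by
    have h1 : A.rho (s * (t⁻¹ * s)) (t * (t⁻¹ * s)) := A.rho_mulR _ h
    have h2 : A.rho (t * (t⁻¹ * s)) (t * (t⁻¹ * t)) := A.rho_mulL _ (A.rho_mulL _ h)
    have h3 : t * (t⁻¹ * t) = t := by rw [← mul_assoc, mul_inv_mul]
    exact A.rho_symm
      (A.rho_trans h1 (A.rho_trans h2 (A.rho_trans (A.rho_of_eq h3) (A.rho_symm h))))
  have hb : A.rho s⁻¹ (t⁻¹ * (s * s⁻¹)) := by
    have e1 : s⁻¹ * (s * s⁻¹) = s⁻¹ := by rw [← mul_assoc, inv_mul_inv]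
    have h2 := A.rho_mulL s⁻¹ (A.rho_mulR s⁻¹ haca)
    simp only [mul_assoc] at h2
    have h3 := A.rho_mulR s⁻¹ (A.rho_idem_comm hba hca)
    simp only [mul_assoc] at h3
    rw [e1] at h3
    exact A.rho_trans (A.rho_of_eq e1.symm) (A.rho_trans h2 h3)
  have hc1 : A.rho t⁻¹ (t⁻¹ * (s * t⁻¹)) := by
    have e1 : t⁻¹ * (t * t⁻¹) = t⁻¹ := by rw [← mul_assoc, inv_mul_inv]
    have h1 := A.rho_mulL t⁻¹ (A.rho_mulR t⁻¹ h)
    rw [e1] at h1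
    exact A.rho_symm h1
  have hc : A.rho t⁻¹ (t⁻¹ * (s * s⁻¹)) := by
    have h4 := A.rho_mulL t⁻¹ (A.rho_idem_comm hab hac)
    simp only [mul_assoc] at h4
    have e2 : s * (s⁻¹ * (s * t⁻¹)) = s * t⁻¹ := by
      simp only [← mul_assoc]
      rw [mul_inv_mul]
    rw [e2] at h4
    have h5 := A.rho_mulR (s * s⁻¹) (A.rho_symm hc1)
    simp only [mul_assoc] at h5
    exact A.rho_trans hc1 (A.rho_trans h4 h5)
  exact A.rho_trans hb (A.rho_symm hc)

end SupportedAction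

open InvSemigroup in
lemma conj_idem {S : Type*} [InvSemigroup S] {e : S} (he : e * e = e) (s : S) :
    (s * e * s⁻¹) * (s * e * s⁻¹) = s * e * s⁻¹ := by
  have h1 : e * (s⁻¹ * s) = (s⁻¹ * s) * e := idem_comm he (d_idem s)
  calc (s * e * s⁻¹) * (s * e * s⁻¹)
      = s * (e * (s⁻¹ * s)) * (e * s⁻¹) := by simp only [mul_assoc]
    _ = s * ((s⁻¹ * s) * e) * (e * s⁻¹) := by rw [h1]
    _ = (s * s⁻¹ * s) * (e * e) * s⁻¹ := by simp only [mul_assoc]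
    _ = s * e * s⁻¹ := by rw [mul_inv_mul, he]

lemma munnElt_ext {X E : Type*} [MeetSL E] {P : SPresheaf X E} {m n : MunnElt P}
    (he : m.e = n.e) (hf : m.f = n.f)
    (hm : ∀ x y, m.maps x y → n.maps x y)
    (hE : ∀ a b, m.mapsE a b → n.mapsE a b) : m = n := by
  obtain ⟨e, f, α, θ, ho1, ho2, hc⟩ := m
  obtain ⟨e', f', α', θ', ho1', ho2', hc'⟩ := n
  dsimp at he hf
  subst he; subst hf
  have hα : α = α' := by
    apply Equiv.ext
    intro x
    obtain ⟨h', hy⟩ := hm x.1 (α x).1 ⟨x.2, rfl⟩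
    have hxx : (⟨x.1, h'⟩ : P.sub e) = x := rfl
    rw [hxx] at hy
    exact (Subtype.ext hy).symm
  have hθ : θ = θ' := by
    apply Equiv.ext
    intro a
    obtain ⟨h', hy⟩ := hE a.1 (θ a).1 ⟨a.2, rfl⟩
    have haa : (⟨a.1, h'⟩ : dOn E e) = a := rfl
    rw [haa] at hy
    exact (Subtype.ext hy).symm
  subst hα; subst hθ
  rfl

section MunnRep

variable {X S : Type*} [InvSemigroup S] {A : SupportedAction X S}
  {ξ : S → MunnElt A.toPresheaf}

lemma maps_iff (hξ : IsMunnRep A ξ) (s : S) (x y : X) :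
    (ξ s).maps x y ↔ (A.p x = A.p x * (s⁻¹ * s) ∧ A.act x s⁻¹ = y) := by
  unfold MunnElt.maps
  constructor
  · rintro ⟨h, rfl⟩
    refine ⟨?_, ((hξ s).2.2.1 ⟨x, h⟩).symm⟩
    have h2 : A.p x = A.p x * ((ξ s).e).1 := congrArg Subtype.val h
    rw [(hξ s).1] at h2
    exact h2
  · rintro ⟨h1, rfl⟩
    have h : sle (A.toPresheaf.p x) (ξ s).e := by
      apply Subtype.ext
      show A.p x = A.p x * ((ξ s).e).1
      rw [(hξ s).1]
      exact h1
    exact ⟨h, (hξ s).2.2.1 ⟨x, h⟩⟩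

lemma mapsE_iff (hξ : IsMunnRep A ξ) (s : S) (a b : ES S) :
    (ξ s).mapsE a b ↔ (a.1 = a.1 * (s⁻¹ * s) ∧ s * a.1 * s⁻¹ = b.1) := by
  unfold MunnElt.mapsE
  constructor
  · rintro ⟨h, rfl⟩
    refine ⟨?_, ((hξ s).2.2.2 ⟨a, h⟩).symm⟩
    have h2 : a.1 = a.1 * ((ξ s).e).1 := congrArg Subtype.val h
    rw [(hξ s).1] at h2
    exact h2
  · rintro ⟨h1, h2⟩
    have h : sle a (ξ s).e := by
      apply Subtype.ext
      show a.1 = a.1 * ((ξ s).e).1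
      rw [(hξ s).1]
      exact h1
    refine ⟨h, ?_⟩
    apply Subtype.ext
    rw [(hξ s).2.2.2 ⟨a, h⟩]
    exact h2

open InvSemigroup in
lemma ker_sub_rho (hξ : IsMunnRep A ξ) {s t : S} (hst : ξ s = ξ t) : A.rho s t := by
  have hr : s * s⁻¹ = t * t⁻¹ := by
    have h0 : ((ξ s).f).1 = ((ξ t).f).1 := by rw [hst]
    rw [(hξ s).2.1, (hξ t).2.1] at h0
    exact h0
  intro x
  set z := A.act x (s * s⁻¹) with hz
  have hmaps_s : (ξ s).maps (A.act z s) z := by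
    rw [maps_iff hξ]
    constructor
    · rw [A.p_act]
      calc s⁻¹ * A.p z * s = s⁻¹ * A.p z * (s * s⁻¹ * s) := by rw [mul_inv_mul]
        _ = s⁻¹ * A.p z * s * (s⁻¹ * s) := by simp only [mul_assoc]
    · rw [A.act_act, hz, A.act_act, r_idem]
  have hmaps_s' : (ξ t).maps (A.act z s) z := by rw [← hst]; exact hmaps_s
  have hmaps_t : (ξ t).maps (A.act z t) z := by
    rw [maps_iff hξ]
    constructor
    · rw [A.p_act]
      calc t⁻¹ * A.p z * t = t⁻¹ * A.p z * (t * t⁻¹ * t) := by rw [mul_inv_mul]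
        _ = t⁻¹ * A.p z * t * (t⁻¹ * t) := by simp only [mul_assoc]
    · rw [A.act_act, hz, A.act_act, hr, r_idem]
  obtain ⟨h1, hv1⟩ := hmaps_s'
  obtain ⟨h2, hv2⟩ := hmaps_t
  have heq : (⟨A.act z s, h1⟩ : A.toPresheaf.sub (ξ t).e) = ⟨A.act z t, h2⟩ :=
    (ξ t).α.injective (Subtype.ext (hv1.trans hv2.symm))
  have hzs : A.act z s = A.act z t := congrArg Subtype.val heq
  rw [hz, A.act_act, A.act_act] at hzs
  have e1 : s * s⁻¹ * s = s := mul_inv_mul s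
  have e2 : s * s⁻¹ * t = t := by rw [hr, mul_inv_mul]
  rw [e1, e2] at hzs
  exact hzs

end MunnRep

end AuxProof

/-- for a supported action `(X, S, p)` with characteristic congruence `ρ_X`
and generalised Munn representation `ξ : S → T_Y`: (1) `ρ_X` is a congruence and
`ker ξ ⊆ ρ_X`; (2) `ρ_X` is idempotent-separating iff `ker ξ = ρ_X`; (3) if `ρ_X` is
equality then `ξ` is faithful. -/
theorem characteristic_congruence {X S : Type*} [InvSemigroup S] (A : SupportedAction X S)
    (ξ : S → MunnElt A.toPresheaf) (hξ : IsMunnRep A ξ) :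
    (Equivalence A.rho ∧
      (∀ s t s' t' : S, A.rho s s' → A.rho t t' → A.rho (s * t) (s' * t')) ∧
      (∀ s t : S, ξ s = ξ t → A.rho s t)) ∧
    ((∀ e f : S, e * e = e → f * f = f → A.rho e f → e = f) ↔
      (∀ s t : S, ξ s = ξ t ↔ A.rho s t)) ∧
    ((∀ s t : S, A.rho s t → s = t) → Function.Injective ξ) := by
  have hker : ∀ s t : S, ξ s = ξ t → A.rho s t := fun s t h => ker_sub_rho hξ h
  refine ⟨⟨⟨fun s x => rfl, fun h x => (h x).symm, fun h1 h2 x => (h1 x).trans (h2 x)⟩,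
      fun s t s' t' hs ht => A.rho_mul hs ht, hker⟩, ⟨?_, ?_⟩, ?_⟩
  · intro hsep s t
    refine ⟨hker s t, ?_⟩
    intro hρ
    have hinv := A.rho_inv hρ
    have hd : s⁻¹ * s = t⁻¹ * t :=
      hsep _ _ (InvSemigroup.d_idem s) (InvSemigroup.d_idem t) (A.rho_mul hinv hρ)
    have hr : s * s⁻¹ = t * t⁻¹ :=
      hsep _ _ (InvSemigroup.r_idem s) (InvSemigroup.r_idem t) (A.rho_mul hρ hinv)
    apply munnElt_ext
    · apply Subtype.ext
      rw [(hξ s).1, (hξ t).1]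
      exact hd
    · apply Subtype.ext
      rw [(hξ s).2.1, (hξ t).2.1]
      exact hr
    · intro x y hm
      rw [maps_iff hξ] at hm ⊢
      exact ⟨by rw [← hd]; exact hm.1, by rw [← hinv x]; exact hm.2⟩
    · intro a b hm
      rw [mapsE_iff hξ] at hm ⊢
      refine ⟨by rw [← hd]; exact hm.1, ?_⟩
      have hconj : s * a.1 * s⁻¹ = t * a.1 * t⁻¹ := by
        apply hsep _ _ (conj_idem a.2 s) (conj_idem a.2 t)
        exact A.rho_mul (A.rho_mul hρ (A.rho_refl a.1)) hinv
      rw [← hconj]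
      exact hm.2
  · intro hkr e f he hf hρ
    have h1 := (hkr e f).mpr hρ
    have h2 : ((ξ e).e).1 = ((ξ f).e).1 := by rw [h1]
    rw [(hξ e).1, (hξ f).1, InvSemigroup.idem_inv he, InvSemigroup.idem_inv hf, he, hf] at h2
    exact h2
  · intro heq s t h
    exact heq s t (hker s t h)
end

section
/- Let S be an inverse semigroup and (X,S,p) a supported action with global support (p surjective). Then the characteristic congruence ρ_X of (X,S,p) is idempotent-separating: if e,f ∈ E(S) satisfy x·e = x·f for all x ∈ X, then e = f. -/
/-- the characteristic congruence of a supported action with global support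
is idempotent-separating. -/
theorem char_congruence_idem_sep {X S : Type*} [InvSemigroup S] (A : SupportedAction X S)
    (hglob : ∀ e : S, e * e = e → ∃ x, A.p x = e)
    (e f : S) (he : e * e = e) (hf : f * f = f)
    (h : ∀ x, A.act x e = A.act x f) : e = f := by
  have inv_idem : ∀ g : S, g * g = g → g⁻¹ = g := by
    intro g hg
    exact (InvSemigroup.inv_unique g g (by rw [hg, hg]) (by rw [hg, hg])).symm
  -- pick x with p x = e
  obtain ⟨x, hx⟩ := hglob e he
  have hxe : A.act x e = x := by rw [← hx, A.act_p]
  have hxf : A.act x f = x := by rw [← h x]; exact hxe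
  have h1 : f * e * f = e := by
    have := A.p_act x f
    rw [hxf, hx, inv_idem f hf] at this
    exact this.symm
  obtain ⟨y, hy⟩ := hglob f hf
  have hyf : A.act y f = y := by rw [← hy, A.act_p]
  have hye : A.act y e = y := by rw [h y]; exact hyf
  have h2 : e * f * e = f := by
    have := A.p_act y e
    rw [hye, hy, inv_idem e he] at this
    exact this.symm
  have hef1 : e * f = e := by
    calc e * f = f * e * f * f := by rw [h1]
      _ = f * e * (f * f) := by rw [mul_assoc]
      _ = f * e * f := by rw [hf]
      _ = e := h1
  have hef2 : e * f = f := by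
    calc e * f = e * (e * f * e) := by rw [h2]
      _ = e * e * (f * e) := by rw [mul_assoc, mul_assoc]
      _ = e * f * e := by rw [he, mul_assoc]
      _ = f := h2
  rw [← hef1, hef2]
end

section
/- Let S be an inverse semigroup and ρ an idempotent-separating congruence on S. Define an action S/ρ × S → S/ρ by ρ(s)·t = ρ(st) and a map p : S/ρ → E(S) by p(ρ(s)) = s⁻¹s. Then p and the action are well-defined, (S/ρ, S, p) is a supported action with global support, and its characteristic congruence equals ρ. -/
section Aux
variable {S : Type*} [InvSemigroup S]

private lemma mim (a : S) : a * a⁻¹ * a = a := InvSemigroup.mul_inv_mul a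
private lemma imi (a : S) : a⁻¹ * a * a⁻¹ = a⁻¹ := InvSemigroup.inv_mul_inv a

private lemma idem_inv {e : S} (he : e * e = e) : e⁻¹ = e :=
  (InvSemigroup.inv_unique e e (by rw [he, he]) (by rw [he, he])).symm

private lemma inv_inv' (a : S) : a⁻¹⁻¹ = a :=
  (InvSemigroup.inv_unique a⁻¹ a (imi a) (mim a)).symm

private lemma idem_ia (a : S) : (a⁻¹ * a) * (a⁻¹ * a) = a⁻¹ * a := by
  rw [← mul_assoc, imi]

private lemma idem_ai (a : S) : (a * a⁻¹) * (a * a⁻¹) = a * a⁻¹ := by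
  rw [← mul_assoc, mim]

private lemma idem_mul {e f : S} (he : e * e = e) (hf : f * f = f) :
    (e * f) * (e * f) = e * f := by
  set x := (e * f)⁻¹ with hx
  have h1 : f * x * e = x := by
    apply InvSemigroup.inv_unique
    · calc (e * f) * (f * x * e) * (e * f)
          = e * (f * f) * x * (e * e) * f := by simp only [mul_assoc]
        _ = (e * f) * (e * f)⁻¹ * (e * f) := by rw [he, hf]; simp only [mul_assoc, hx]
        _ = e * f := mim _
    · calc (f * x * e) * (e * f) * (f * x * e)
          = f * (x * ((e * e) * ((f * f) * (x * e)))) := by simp only [mul_assoc]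
        _ = f * (x * (e * (f * (x * e)))) := by rw [he, hf]
        _ = f * ((e * f)⁻¹ * (e * f) * (e * f)⁻¹) * e := by simp only [mul_assoc, hx]
        _ = f * x * e := by rw [imi]
  have hxx : x * x = x := by
    calc x * x = (f * x * e) * (f * x * e) := by rw [h1]
      _ = f * ((e * f)⁻¹ * (e * f) * (e * f)⁻¹) * e := by simp only [mul_assoc, hx]
      _ = f * x * e := by rw [imi]
      _ = x := h1
  have hef : e * f = x := by
    rw [hx] at hxx ⊢
    exact (inv_inv' (e * f)).symm.trans (idem_inv hxx)
  rw [hef, hxx]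

private lemma idem_comm {e f : S} (he : e * e = e) (hf : f * f = f) :
    e * f = f * e := by
  have hef := idem_mul he hf
  have hfe := idem_mul hf he
  have : f * e = (e * f)⁻¹ := by
    apply InvSemigroup.inv_unique
    · calc (e * f) * (f * e) * (e * f)
          = e * (f * f) * (e * e) * f := by simp only [mul_assoc]
        _ = (e * f) * (e * f) := by rw [he, hf]; simp only [mul_assoc]
        _ = e * f := hef
    · calc (f * e) * (e * f) * (f * e)
          = f * (e * e) * (f * f) * e := by simp only [mul_assoc]
        _ = (f * e) * (f * e) := by rw [he, hf]; simp only [mul_assoc]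
        _ = f * e := hfe
  rw [this, idem_inv hef]

private lemma mul_inv_rev' (a b : S) : (a * b)⁻¹ = b⁻¹ * a⁻¹ := by
  symm
  apply InvSemigroup.inv_unique
  · calc (a * b) * (b⁻¹ * a⁻¹) * (a * b)
        = a * ((b * b⁻¹) * (a⁻¹ * a)) * b := by simp only [mul_assoc]
      _ = a * ((a⁻¹ * a) * (b * b⁻¹)) * b := by rw [idem_comm (idem_ai b) (idem_ia a)]
      _ = (a * a⁻¹ * a) * (b * b⁻¹ * b) := by simp only [mul_assoc]
      _ = a * b := by rw [mim, mim]
  · calc (b⁻¹ * a⁻¹) * (a * b) * (b⁻¹ * a⁻¹)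
        = b⁻¹ * ((a⁻¹ * a) * (b * b⁻¹)) * a⁻¹ := by simp only [mul_assoc]
      _ = b⁻¹ * ((b * b⁻¹) * (a⁻¹ * a)) * a⁻¹ := by rw [idem_comm (idem_ia a) (idem_ai b)]
      _ = (b⁻¹ * b * b⁻¹) * (a⁻¹ * a * a⁻¹) := by simp only [mul_assoc]
      _ = b⁻¹ * a⁻¹ := by rw [imi, imi]

private lemma key_right {ρ : S → S → Prop} (hequiv : Equivalence ρ)
    (hcong : ∀ s t s' t' : S, ρ s s' → ρ t t' → ρ (s * t) (s' * t'))
    (hsep : ∀ e f : S, e * e = e → f * f = f → ρ e f → e = f) {a b : S} (hab : ρ a b) : a⁻¹ * a = b⁻¹ * b := by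
  have h1 : ρ (a⁻¹ * a) (a⁻¹ * b) := hcong _ _ _ _ (hequiv.refl a⁻¹) hab
  have h2 : ρ (b⁻¹ * b) (b⁻¹ * a) := hcong _ _ _ _ (hequiv.refl b⁻¹) (hequiv.symm hab)
  have hef : (a⁻¹ * a) * (b⁻¹ * b) = a⁻¹ * a := by
    apply hsep _ _ (idem_mul (idem_ia a) (idem_ia b)) (idem_ia a)
    have : ρ ((a⁻¹ * a) * (b⁻¹ * b)) ((a⁻¹ * b) * (b⁻¹ * b)) :=
      hcong _ _ _ _ h1 (hequiv.refl _)
    have he : (a⁻¹ * b) * (b⁻¹ * b) = a⁻¹ * b := by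
      rw [mul_assoc, ← mul_assoc b, mim]
    rw [he] at this
    exact hequiv.trans this (hequiv.symm h1)
  have hfe : (b⁻¹ * b) * (a⁻¹ * a) = b⁻¹ * b := by
    apply hsep _ _ (idem_mul (idem_ia b) (idem_ia a)) (idem_ia b)
    have : ρ ((b⁻¹ * b) * (a⁻¹ * a)) ((b⁻¹ * a) * (a⁻¹ * a)) :=
      hcong _ _ _ _ h2 (hequiv.refl _)
    have he : (b⁻¹ * a) * (a⁻¹ * a) = b⁻¹ * a := by
      rw [mul_assoc, ← mul_assoc a, mim]
    rw [he] at this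
    exact hequiv.trans this (hequiv.symm h2)
  rw [← hef, idem_comm (idem_ia a) (idem_ia b), hfe]

private lemma key_left {ρ : S → S → Prop} (hequiv : Equivalence ρ)
    (hcong : ∀ s t s' t' : S, ρ s s' → ρ t t' → ρ (s * t) (s' * t'))
    (hsep : ∀ e f : S, e * e = e → f * f = f → ρ e f → e = f) {a b : S} (hab : ρ a b) : a * a⁻¹ = b * b⁻¹ := by
  have h1 : ρ (a * a⁻¹) (b * a⁻¹) := hcong _ _ _ _ hab (hequiv.refl a⁻¹)
  have h2 : ρ (b * b⁻¹) (a * b⁻¹) := hcong _ _ _ _ (hequiv.symm hab) (hequiv.refl b⁻¹)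
  have hef : (b * b⁻¹) * (a * a⁻¹) = a * a⁻¹ := by
    apply hsep _ _ (idem_mul (idem_ai b) (idem_ai a)) (idem_ai a)
    have : ρ ((b * b⁻¹) * (a * a⁻¹)) ((b * b⁻¹) * (b * a⁻¹)) :=
      hcong _ _ _ _ (hequiv.refl _) h1
    have he : (b * b⁻¹) * (b * a⁻¹) = b * a⁻¹ := by
      rw [mul_assoc, ← mul_assoc b⁻¹, ← mul_assoc b, ← mul_assoc b, mim]
    rw [he] at this
    exact hequiv.trans this (hequiv.symm h1)
  have hfe : (a * a⁻¹) * (b * b⁻¹) = b * b⁻¹ := by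
    apply hsep _ _ (idem_mul (idem_ai a) (idem_ai b)) (idem_ai b)
    have : ρ ((a * a⁻¹) * (b * b⁻¹)) ((a * a⁻¹) * (a * b⁻¹)) :=
      hcong _ _ _ _ (hequiv.refl _) h2
    have he : (a * a⁻¹) * (a * b⁻¹) = a * b⁻¹ := by
      rw [mul_assoc, ← mul_assoc a⁻¹, ← mul_assoc a, ← mul_assoc a, mim]
    rw [he] at this
    exact hequiv.trans this (hequiv.symm h2)
  rw [← hef, idem_comm (idem_ai b) (idem_ai a), hfe]

end Aux

/-- every idempotent-separating congruence `ρ` on `S` arises as the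
characteristic congruence of the globally supported action of `S` on `S/ρ` defined by
`ρ(s) · t = ρ(st)` with support map `p(ρ(s)) = s⁻¹s`. -/
theorem quotient_supported_action {S : Type*} [InvSemigroup S] (ρ : S → S → Prop)
    (hequiv : Equivalence ρ)
    (hcong : ∀ s t s' t' : S, ρ s s' → ρ t t' → ρ (s * t) (s' * t'))
    (hsep : ∀ e f : S, e * e = e → f * f = f → ρ e f → e = f) :
    ∃ A : SupportedAction (Quot ρ) S,
      (∀ s t : S, A.act (Quot.mk ρ s) t = Quot.mk ρ (s * t)) ∧
      (∀ s : S, A.p (Quot.mk ρ s) = s⁻¹ * s) ∧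
      (∀ e : S, e * e = e → ∃ x, A.p x = e) ∧
      (∀ s t : S, (∀ x, A.act x s = A.act x t) ↔ ρ s t) := by
  have exact' : ∀ {a b : S}, Quot.mk ρ a = Quot.mk ρ b → ρ a b := fun h =>
    hequiv.eqvGen_iff.mp (Quot.eqvGen_exact h)
  refine ⟨{ act := fun x s => Quot.lift (fun a => Quot.mk ρ (a * s))
              (fun a b h => Quot.sound (hcong a s b s h (hequiv.refl s))) x
            p := Quot.lift (fun a => a⁻¹ * a)
              (fun a b h => key_right hequiv hcong hsep h)
            p_idem := ?_, act_act := ?_, act_p := ?_, p_act := ?_ }, ?_, ?_, ?_, ?_⟩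
  · refine Quot.ind fun a => ?_
    exact idem_ia a
  · refine Quot.ind fun a => fun s t => ?_
    show Quot.mk ρ (a * s * t) = Quot.mk ρ (a * (s * t))
    rw [mul_assoc]
  · refine Quot.ind fun a => ?_
    show Quot.mk ρ (a * (a⁻¹ * a)) = Quot.mk ρ a
    rw [← mul_assoc, mim]
  · refine Quot.ind fun a => fun s => ?_
    show (a * s)⁻¹ * (a * s) = s⁻¹ * (a⁻¹ * a) * s
    rw [mul_inv_rev']
    simp only [mul_assoc]
  · intro s t; rfl
  · intro s; rfl
  · intro e he
    exact ⟨Quot.mk ρ e, by show e⁻¹ * e = e; rw [idem_inv he, he]⟩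
  · intro s t
    constructor
    · intro h
      have h1 : ρ s (s * s⁻¹ * t) := by
        have := exact' (h (Quot.mk ρ (s * s⁻¹)))
        rwa [show s * s⁻¹ * s = s from mim s] at this
      have h2 : ρ (t * t⁻¹ * s) t := by
        have := exact' (h (Quot.mk ρ (t * t⁻¹)))
        rwa [show t * t⁻¹ * t = t from mim t] at this
      have hkey : (t * t⁻¹ * s) * (t * t⁻¹ * s)⁻¹ = t * t⁻¹ :=
        key_left hequiv hcong hsep h2
      have hexp : (t * t⁻¹ * s) * (t * t⁻¹ * s)⁻¹ = (t * t⁻¹) * ((s * s⁻¹) * (t * t⁻¹)) := by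
        rw [mul_inv_rev', mul_inv_rev', inv_inv']
        simp only [mul_assoc]
      have hL : (t * t⁻¹) * ((s * s⁻¹) * (t * t⁻¹)) = t * t⁻¹ := hexp.symm.trans hkey
      have hst : (s * s⁻¹) * (t * t⁻¹) = t * t⁻¹ := by
        rw [idem_comm (idem_ai s) (idem_ai t)] at hL ⊢
        calc (t * t⁻¹) * (s * s⁻¹)
            = ((t * t⁻¹) * (t * t⁻¹)) * (s * s⁻¹) := by rw [idem_ai]
          _ = (t * t⁻¹) * ((t * t⁻¹) * (s * s⁻¹)) := by simp only [mul_assoc]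
          _ = t * t⁻¹ := by
              rw [idem_comm (idem_ai t) (idem_ai s)] at hL ⊢
              exact hL
      have hfix : s * s⁻¹ * t = t := by
        calc s * s⁻¹ * t = s * s⁻¹ * (t * t⁻¹ * t) := by rw [mim]
          _ = ((s * s⁻¹) * (t * t⁻¹)) * t := by simp only [mul_assoc]
          _ = t * t⁻¹ * t := by rw [hst]
          _ = t := mim t
      rwa [hfix] at h1
    · intro h
      refine Quot.ind fun a => ?_
      exact Quot.sound (hcong a s a t (hequiv.refl a) h)
end

section
/- Let S be an inverse semigroup. Then the triple (S,S,d), where S acts on itself by right multiplication s·t = st and d(s) = s⁻¹s, is a supported action with global support, its characteristic congruence is equality, and the generalised Munn representation ξ : S → T_S is an injective homomorphism, so S embeds into the generalised Munn semigroup T_S. -/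
open InvSemigroup in
/-- The supported action `(S, S, d)` of an inverse semigroup on itself by right
multiplication, with support map `d(s) = s⁻¹s`. -/
def rightAction (S : Type*) [InvSemigroup S] : SupportedAction S S where
  act s t := s * t
  p s := s⁻¹ * s
  p_idem := d_idem
  act_act := mul_assoc
  act_p s := by
    have h := mul_inv_mul s
    rwa [mul_assoc] at h
  p_act x s := by
    show (x * s)⁻¹ * (x * s) = s⁻¹ * (x⁻¹ * x) * s
    rw [InvSemigroup.mul_inv_rev]
    simp only [mul_assoc]

section WPAux

variable {S : Type*} [InvSemigroup S]

theorem wp_mim (a : S) : a * (a⁻¹ * a) = a := by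
  rw [← mul_assoc, InvSemigroup.mul_inv_mul]

theorem wp_imi (a y : S) : a⁻¹ * (a * (a⁻¹ * y)) = a⁻¹ * y := by
  rw [← mul_assoc, ← mul_assoc, InvSemigroup.inv_mul_inv]

theorem wp_key1a (e s t : S) (h : e = e * (t⁻¹ * (s⁻¹ * (s * t)))) :
    e = e * (t⁻¹ * t) := by
  have hh : e * (t⁻¹ * t) = e := by
    conv_lhs => rw [h]
    simp only [mul_assoc]
    rw [wp_mim t]
    exact h.symm
  exact hh.symm

theorem wp_key1b (e s t : S) (h : e = e * (t⁻¹ * (s⁻¹ * (s * t)))) :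
    t * (e * t⁻¹) = (t * (e * t⁻¹)) * (s⁻¹ * s) := by
  have hb : e * t⁻¹ = e * (t⁻¹ * (s⁻¹ * s)) := by
    conv_lhs => rw [h]
    simp only [mul_assoc]
    rw [← mul_assoc s⁻¹ s (t * t⁻¹),
      InvSemigroup.idem_comm (InvSemigroup.d_idem s) (InvSemigroup.r_idem t)]
    simp only [mul_assoc]
    rw [wp_imi]
  rw [mul_assoc, mul_assoc, ← hb]

theorem wp_lshift (e t : S) (he : e * e = e) (h1 : e = e * (t⁻¹ * t)) (y : S) :
    t⁻¹ * (t * (e * y)) = e * y := by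
  calc t⁻¹ * (t * (e * y)) = ((t⁻¹ * t) * e) * y := by simp only [mul_assoc]
    _ = (e * (t⁻¹ * t)) * y := by
        rw [InvSemigroup.idem_comm (InvSemigroup.d_idem t) he]
    _ = e * y := by rw [← h1]

theorem wp_key2 (e s t : S) (he : e * e = e) (h1 : e = e * (t⁻¹ * t))
    (h2 : t * (e * t⁻¹) = t * (e * (t⁻¹ * (s⁻¹ * s)))) :
    e = e * (t⁻¹ * (s⁻¹ * (s * t))) := by
  have h3 := congrArg (fun z => t⁻¹ * (z * t)) h2
  simp only [mul_assoc] at h3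
  rw [wp_lshift e t he h1, wp_lshift e t he h1] at h3
  rw [← h1] at h3
  exact h3

theorem wp_conj_idem (e t : S) (he : e * e = e) (h1 : e = e * (t⁻¹ * t)) :
    (t * (e * t⁻¹)) * (t * (e * t⁻¹)) = t * (e * t⁻¹) := by
  have l := wp_lshift e t he h1 t⁻¹
  calc (t * (e * t⁻¹)) * (t * (e * t⁻¹))
      = t * (e * (t⁻¹ * (t * (e * t⁻¹)))) := by simp only [mul_assoc]
    _ = t * (e * (e * t⁻¹)) := by rw [l]
    _ = t * (e * t⁻¹) := by rw [← mul_assoc e e, he]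

theorem wp_cancel {s t : S} (h1 : s = s * s⁻¹ * t) (h2 : t * t⁻¹ * s = t) : s = t := by
  have k1 : s * s⁻¹ = (s * s⁻¹) * ((t * t⁻¹) * (s * s⁻¹)) := by
    conv_lhs => rw [h1]
    rw [InvSemigroup.mul_inv_rev (s * s⁻¹) t, InvSemigroup.mul_inv_rev s s⁻¹,
      InvSemigroup.inv_inv s]
    simp only [mul_assoc]
  have k2 : s * s⁻¹ = (s * s⁻¹) * (t * t⁻¹) := by
    calc s * s⁻¹ = (s * s⁻¹) * ((t * t⁻¹) * (s * s⁻¹)) := k1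
      _ = (s * s⁻¹) * ((s * s⁻¹) * (t * t⁻¹)) := by
          rw [InvSemigroup.idem_comm (InvSemigroup.r_idem t) (InvSemigroup.r_idem s)]
      _ = ((s * s⁻¹) * (s * s⁻¹)) * (t * t⁻¹) := by simp only [mul_assoc]
      _ = (s * s⁻¹) * (t * t⁻¹) := by rw [InvSemigroup.r_idem s]
  have k1' : t * t⁻¹ = (t * t⁻¹) * ((s * s⁻¹) * (t * t⁻¹)) := by
    conv_lhs => rw [← h2]
    rw [InvSemigroup.mul_inv_rev (t * t⁻¹) s, InvSemigroup.mul_inv_rev t t⁻¹,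
      InvSemigroup.inv_inv t]
    simp only [mul_assoc]
  have k2' : t * t⁻¹ = (t * t⁻¹) * (s * s⁻¹) := by
    calc t * t⁻¹ = (t * t⁻¹) * ((s * s⁻¹) * (t * t⁻¹)) := k1'
      _ = (t * t⁻¹) * ((t * t⁻¹) * (s * s⁻¹)) := by
          rw [InvSemigroup.idem_comm (InvSemigroup.r_idem s) (InvSemigroup.r_idem t)]
      _ = ((t * t⁻¹) * (t * t⁻¹)) * (s * s⁻¹) := by simp only [mul_assoc]
      _ = (t * t⁻¹) * (s * s⁻¹) := by rw [InvSemigroup.r_idem t]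
  have hfg : s * s⁻¹ = t * t⁻¹ := by
    rw [k2, InvSemigroup.idem_comm (InvSemigroup.r_idem s) (InvSemigroup.r_idem t)]
    exact k2'.symm
  rw [← hfg, InvSemigroup.mul_inv_mul] at h2
  exact h2

end WPAux

/-- Extensionality for Munn elements: a Munn element is determined by the graphs of
its two components. -/
theorem munn_ext {X E : Type*} [MeetSL E] {P : SPresheaf X E} {a b : MunnElt P}
    (hm : ∀ x y, a.maps x y ↔ b.maps x y)
    (hE : ∀ h k, a.mapsE h k ↔ b.mapsE h k) : a = b := by
  have slerefl : ∀ c : E, sle c c := fun c => (MeetSL.idem c).symm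
  have sleas : ∀ c d : E, sle c d → sle d c → c = d := by
    intro c d h1 h2
    rw [h1, mul_comm]
    exact h2.symm
  have he : a.e = b.e := by
    apply sleas
    · obtain ⟨h', -⟩ := (hE a.e (a.θ ⟨a.e, slerefl _⟩).1).1 ⟨slerefl _, rfl⟩
      exact h'
    · obtain ⟨h', -⟩ := (hE b.e (b.θ ⟨b.e, slerefl _⟩).1).2 ⟨slerefl _, rfl⟩
      exact h'
  have hf : a.f = b.f := by
    apply sleas
    · obtain ⟨hd, hv⟩ := (hE (a.θ.symm ⟨a.f, slerefl _⟩).1 a.f).1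
        ⟨(a.θ.symm ⟨a.f, slerefl _⟩).2,
         congrArg Subtype.val (a.θ.apply_symm_apply ⟨a.f, slerefl _⟩)⟩
      exact hv ▸ (b.θ ⟨_, hd⟩).2
    · obtain ⟨hd, hv⟩ := (hE (b.θ.symm ⟨b.f, slerefl _⟩).1 b.f).2
        ⟨(b.θ.symm ⟨b.f, slerefl _⟩).2,
         congrArg Subtype.val (b.θ.apply_symm_apply ⟨b.f, slerefl _⟩)⟩
      exact hv ▸ (a.θ ⟨_, hd⟩).2
  obtain ⟨e1, f1, α1, θ1, o1, O1, c1⟩ := a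
  obtain ⟨e2, f2, α2, θ2, o2, O2, c2⟩ := b
  obtain rfl : e1 = e2 := he
  obtain rfl : f1 = f2 := hf
  obtain rfl : α1 = α2 := by
    apply Equiv.ext
    intro x
    apply Subtype.ext
    obtain ⟨h', hv⟩ := (hm x.1 (α1 x).1).1 ⟨x.2, rfl⟩
    exact hv.symm
  obtain rfl : θ1 = θ2 := by
    apply Equiv.ext
    intro x
    apply Subtype.ext
    obtain ⟨h', hv⟩ := (hE x.1 (θ1 x).1).1 ⟨x.2, rfl⟩
    exact hv.symm
  rfl


/-- the action of an inverse semigroup on itself by right multiplication,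
with `d(s) = s⁻¹s`, is a supported action with global support, its characteristic
congruence is equality, and the generalised Munn representation `ξ : S → T_S` is an
injective homomorphism, so `S` embeds into `T_S`. -/
theorem wagner_preston_munn {S : Type*} [InvSemigroup S]
    (mul : MunnElt (rightAction S).toPresheaf → MunnElt (rightAction S).toPresheaf →
      MunnElt (rightAction S).toPresheaf)
    (hmul : IsMunnMul mul)
    (ξ : S → MunnElt (rightAction S).toPresheaf) (hξ : IsMunnRep (rightAction S) ξ) :
    (∀ e : S, e * e = e → ∃ x : S, (rightAction S).p x = e) ∧
    (∀ s t : S, (∀ x : S, (rightAction S).act x s = (rightAction S).act x t) → s = t) ∧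
    (∀ s t : S, ξ (s * t) = mul (ξ s) (ξ t)) ∧
    Function.Injective ξ := by
  have maps_iff : ∀ (u x y : S), (ξ u).maps x y ↔
      (x⁻¹ * x = (x⁻¹ * x) * (u⁻¹ * u) ∧ y = x * u⁻¹) := by
    intro u x y
    obtain ⟨he1, -, hα1, -⟩ := hξ u
    constructor
    · rintro ⟨h, rfl⟩
      refine ⟨?_, (hα1 ⟨x, h⟩)⟩
      rw [← he1]
      exact congrArg Subtype.val h
    · rintro ⟨h1, rfl⟩
      have h : sle ((rightAction S).toPresheaf.p x) (ξ u).e := by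
        apply Subtype.ext
        show x⁻¹ * x = (x⁻¹ * x) * ((ξ u).e).1
        rw [he1]
        exact h1
      exact ⟨h, hα1 ⟨x, h⟩⟩
  have mapsE_iff : ∀ (u : S) (a b : ES S), (ξ u).mapsE a b ↔
      (a.1 = a.1 * (u⁻¹ * u) ∧ b.1 = u * a.1 * u⁻¹) := by
    intro u a b
    obtain ⟨he1, -, -, hθ1⟩ := hξ u
    constructor
    · rintro ⟨h, rfl⟩
      refine ⟨?_, hθ1 ⟨a, h⟩⟩
      rw [← he1]
      exact congrArg Subtype.val h
    · rintro ⟨h1, h2⟩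
      have h : sle a (ξ u).e := by
        apply Subtype.ext
        show a.1 = a.1 * ((ξ u).e).1
        rw [he1]
        exact h1
      exact ⟨h, Subtype.ext ((hθ1 ⟨a, h⟩).trans h2.symm)⟩
  refine ⟨?_, ?_, ?_, ?_⟩
  · intro e he
    refine ⟨e, ?_⟩
    show e⁻¹ * e = e
    rw [InvSemigroup.idem_inv he, he]
  · intro s t hx
    have h1 : s * s⁻¹ * s = s * s⁻¹ * t := hx (s * s⁻¹)
    have h2 : t * t⁻¹ * s = t * t⁻¹ * t := hx (t * t⁻¹)
    rw [InvSemigroup.mul_inv_mul] at h1 h2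
    exact wp_cancel h1 h2
  · intro s t
    have H := hmul (ξ s) (ξ t)
    apply munn_ext
    · intro x z
      rw [H.1 x z]
      simp only [maps_iff]
      rw [InvSemigroup.mul_inv_rev s t]
      constructor
      · rintro ⟨h1, rfl⟩
        rw [mul_assoc t⁻¹ s⁻¹ (s * t)] at h1
        refine ⟨x * t⁻¹, ⟨wp_key1a _ s t h1, rfl⟩, ?_, ?_⟩
        · have hb := wp_key1b (x⁻¹ * x) s t h1
          simp only [mul_assoc] at hb
          simp only [InvSemigroup.mul_inv_rev, InvSemigroup.inv_inv, mul_assoc]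
          exact hb
        · simp only [mul_assoc]
      · rintro ⟨y, ⟨h1, rfl⟩, h2, rfl⟩
        constructor
        · rw [mul_assoc t⁻¹ s⁻¹ (s * t)]
          apply wp_key2 (x⁻¹ * x) s t (InvSemigroup.d_idem x) h1
          simp only [InvSemigroup.mul_inv_rev, InvSemigroup.inv_inv, mul_assoc] at h2
          simp only [mul_assoc]
          exact h2
        · simp only [mul_assoc]
    · intro a b
      rw [H.2 a b]
      simp only [mapsE_iff]
      rw [InvSemigroup.mul_inv_rev s t]
      constructor
      · rintro ⟨h1, h2⟩
        rw [mul_assoc t⁻¹ s⁻¹ (s * t)] at h1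
        refine ⟨⟨t * (a.1 * t⁻¹), wp_conj_idem a.1 t a.2 (wp_key1a a.1 s t h1)⟩,
          ⟨wp_key1a a.1 s t h1, ?_⟩, ?_, ?_⟩
        · show t * (a.1 * t⁻¹) = t * a.1 * t⁻¹
          rw [← mul_assoc]
        · show t * (a.1 * t⁻¹) = t * (a.1 * t⁻¹) * (s⁻¹ * s)
          have hb := wp_key1b a.1 s t h1
          simp only [mul_assoc] at hb ⊢
          exact hb
        · show b.1 = s * (t * (a.1 * t⁻¹)) * s⁻¹
          rw [h2]
          simp only [mul_assoc]
      · rintro ⟨m, ⟨h1, h2⟩, h3, h4⟩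
        rw [h2] at h3 h4
        refine ⟨?_, ?_⟩
        · rw [mul_assoc t⁻¹ s⁻¹ (s * t)]
          apply wp_key2 a.1 s t a.2 h1
          simp only [mul_assoc] at h3
          exact h3
        · rw [h4]
          simp only [mul_assoc]
  · intro s t h
    obtain ⟨hes, hfs, hαs, -⟩ := hξ s
    obtain ⟨het, hft, hαt, -⟩ := hξ t
    rw [← h] at het hft hαt
    have hd : s⁻¹ * s = t⁻¹ * t := hes.symm.trans het
    have hff : s * s⁻¹ = t * t⁻¹ := hfs.symm.trans hft
    have hx : sle ((rightAction S).toPresheaf.p s) (ξ s).e := by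
      apply Subtype.ext
      show s⁻¹ * s = (s⁻¹ * s) * ((ξ s).e).1
      rw [hes]
      exact (InvSemigroup.d_idem s).symm
    have h3 : s * s⁻¹ = s * t⁻¹ := (hαs ⟨s, hx⟩).symm.trans (hαt ⟨s, hx⟩)
    calc s = s * (s⁻¹ * s) := (wp_mim s).symm
      _ = s * (t⁻¹ * t) := by rw [hd]
      _ = (s * t⁻¹) * t := by rw [← mul_assoc]
      _ = (s * s⁻¹) * t := by rw [← h3]
      _ = (t * t⁻¹) * t := by rw [hff]
      _ = t := InvSemigroup.mul_inv_mul t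
end
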